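/- Let Ξ, Φ : U → ℝ be smooth on an open set U ⊆ ℝⁿ, and ζᵢ smooth functions with ∂ζᵢ/∂qⁱ = 0 (the compatibility from the previous system ensures this when i = j), satisfying ∂Ξ/∂qʲ = 2ζⱼ ∂Φ/∂qʲ for all j. Then for all i ≠ j: (ζᵢ − ζⱼ) 𝒟_{ij}(Φ) = 0, where ∂ζᵢ/∂qʲ = (ζⱼ − ζᵢ)∂ln(hᵢ⁻²)/∂qʲ is also assumed and 𝒟_{ij}(f) = ∂ᵢ∂ⱼf + (∂ᵢ ln hⱼ²)(∂ⱼf) + (∂ⱼ ln hᵢ²)(∂ᵢf). In particular if ζᵢ ≠ ζⱼ pointwise for i ≠ j, then 𝒟_{ij}(Φ) = 0. -/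

import Mathlib

/-- Partial derivative in the `j`-th coordinate direction. -/
noncomputable def pd {n : ℕ} (j : Fin n) (f : (Fin n → ℝ) → ℝ) (q : Fin n → ℝ) : ℝ :=
  fderiv ℝ f q (Pi.single j 1)

/-- The Stäckel differential operator `𝒟_{ij}` associated to scale factors `h`. -/
noncomputable def Dst {n : ℕ} (h : Fin n → (Fin n → ℝ) → ℝ) (i j : Fin n)
    (f : (Fin n → ℝ) → ℝ) (q : Fin n → ℝ) : ℝ :=
  pd i (fun q' => pd j f q') q
    + pd i (fun q' => Real.log ((h j q') ^ 2)) q * pd j f q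
    + pd j (fun q' => Real.log ((h i q') ^ 2)) q * pd i f q

theorem pd_congr' {n : ℕ} {f g : (Fin n → ℝ) → ℝ} {q : Fin n → ℝ} (i : Fin n)
    (h : f =ᶠ[nhds q] g) : pd i f q = pd i g q := by
  unfold pd; rw [h.fderiv_eq]

theorem pd_mul' {n : ℕ} {f g : (Fin n → ℝ) → ℝ} {q : Fin n → ℝ} (i : Fin n)
    (hf : DifferentiableAt ℝ f q) (hg : DifferentiableAt ℝ g q) :
    pd i (fun q' => f q' * g q') q = f q * pd i g q + g q * pd i f q := by
  unfold pd; rw [fderiv_fun_mul hf hg]; simp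

theorem pd_const_mul' {n : ℕ} {f : (Fin n → ℝ) → ℝ} {q : Fin n → ℝ} (i : Fin n) (c : ℝ)
    (hf : DifferentiableAt ℝ f q) :
    pd i (fun q' => c * f q') q = c * pd i f q := by
  unfold pd; rw [fderiv_const_mul hf]; simp

theorem pd_neg' {n : ℕ} (f : (Fin n → ℝ) → ℝ) (q : Fin n → ℝ) (i : Fin n) :
    pd i (fun q' => -f q') q = -pd i f q := by
  unfold pd; rw [fderiv_fun_neg]; simp

theorem pd_diffAt {n : ℕ} {f : (Fin n → ℝ) → ℝ} {q : Fin n → ℝ} (j : Fin n)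
    (hf : ContDiffAt ℝ (⊤ : ℕ∞) f q) :
    DifferentiableAt ℝ (fun q' => pd j f q') q := by
  have hdd : DifferentiableAt ℝ (fderiv ℝ f) q :=
    (hf.fderiv_right (m := 1) (WithTop.coe_le_coe.mpr le_top)).differentiableAt one_ne_zero
  exact hdd.clm_apply (differentiableAt_const _)

theorem pd_pd' {n : ℕ} {f : (Fin n → ℝ) → ℝ} {q : Fin n → ℝ} (i j : Fin n)
    (hf : ContDiffAt ℝ (⊤ : ℕ∞) f q) :
    pd i (fun q' => pd j f q') q
      = fderiv ℝ (fderiv ℝ f) q (Pi.single i 1) (Pi.single j 1) := by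
  have hdd : DifferentiableAt ℝ (fderiv ℝ f) q :=
    (hf.fderiv_right (m := 1) (WithTop.coe_le_coe.mpr le_top)).differentiableAt one_ne_zero
  have : pd i (fun q' => pd j f q') q
      = fderiv ℝ (fun q' => (fderiv ℝ f q') (Pi.single j 1)) q (Pi.single i 1) := rfl
  rw [this, fderiv_clm_apply hdd (differentiableAt_const _)]
  simp

theorem pd_pd_symm {n : ℕ} {f : (Fin n → ℝ) → ℝ} {q : Fin n → ℝ} (i j : Fin n)
    (hf : ContDiffAt ℝ (⊤ : ℕ∞) f q) :
    pd i (fun q' => pd j f q') q = pd j (fun q' => pd i f q') q := by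
  rw [pd_pd' i j hf, pd_pd' j i hf]
  exact (hf.isSymmSndFDerivAt (by rw [minSmoothness_of_isRCLikeNormedField]; exact WithTop.coe_le_coe.mpr (le_top : (2 : ℕ∞) ≤ ⊤))) _ _

/-- Given `∂ζᵢ/∂qⁱ = 0`, `∂Ξ/∂qʲ = 2ζⱼ ∂Φ/∂qʲ` and
`∂ζᵢ/∂qʲ = (ζⱼ − ζᵢ) ∂ln(hᵢ⁻²)/∂qʲ` on an open set `U`, we have
`(ζᵢ − ζⱼ) 𝒟_{ij}(Φ) = 0` for `i ≠ j`; in particular, if the `ζ`'s are pairwise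
distinct pointwise, then `𝒟_{ij}(Φ) = 0`. -/
theorem xi_compatibility_forces_separable {n : ℕ}
    (U : Set (Fin n → ℝ)) (hU : IsOpen U)
    (h : Fin n → (Fin n → ℝ) → ℝ) (hpos : ∀ i q, 0 < h i q)
    (hsm : ∀ i, ContDiffOn ℝ (⊤ : ℕ∞) (h i) U)
    (ζ : Fin n → (Fin n → ℝ) → ℝ) (hζ : ∀ i, ContDiffOn ℝ (⊤ : ℕ∞) (ζ i) U)
    (Ξ Φ : (Fin n → ℝ) → ℝ)
    (hΞ : ContDiffOn ℝ (⊤ : ℕ∞) Ξ U) (hΦ : ContDiffOn ℝ (⊤ : ℕ∞) Φ U)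
    (hdiag : ∀ (i : Fin n), ∀ q ∈ U, pd i (ζ i) q = 0)
    (hXi : ∀ (j : Fin n), ∀ q ∈ U, pd j Ξ q = 2 * ζ j q * pd j Φ q)
    (hrel : ∀ (i j : Fin n), ∀ q ∈ U,
      pd j (ζ i) q
        = (ζ j q - ζ i q) * pd j (fun q' => Real.log (((h i q') ^ 2)⁻¹)) q) :
    (∀ (i j : Fin n), i ≠ j → ∀ q ∈ U, (ζ i q - ζ j q) * Dst h i j Φ q = 0)
      ∧ ((∀ (i j : Fin n), i ≠ j → ∀ q ∈ U, ζ i q ≠ ζ j q) →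
          ∀ (i j : Fin n), i ≠ j → ∀ q ∈ U, Dst h i j Φ q = 0) := by
  have main : ∀ (i j : Fin n), i ≠ j → ∀ q ∈ U, (ζ i q - ζ j q) * Dst h i j Φ q = 0 := by
    intro i j hij q hq
    have hqU : U ∈ nhds q := hU.mem_nhds hq
    have cΦ : ContDiffAt ℝ (⊤ : ℕ∞) Φ q := hΦ.contDiffAt hqU
    have cΞ : ContDiffAt ℝ (⊤ : ℕ∞) Ξ q := hΞ.contDiffAt hqU
    have cζ : ∀ k, ContDiffAt ℝ (⊤ : ℕ∞) (ζ k) q := fun k => (hζ k).contDiffAt hqU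
    have dζ : ∀ k, DifferentiableAt ℝ (ζ k) q :=
      fun k => (cζ k).differentiableAt (by simp)
    -- mixed partial of Ξ computed two ways
    have key : ∀ a b : Fin n, pd a (fun q' => pd b Ξ q') q
        = 2 * ζ b q * pd a (fun q' => pd b Φ q') q + 2 * pd a (ζ b) q * pd b Φ q := by
      intro a b
      have hev : (fun q' => pd b Ξ q') =ᶠ[nhds q]
          (fun q' => (2 * ζ b q') * pd b Φ q') :=
        Filter.eventuallyEq_of_mem hqU (fun x hx => hXi b x hx)
      rw [pd_congr' a hev,
        pd_mul' a ((dζ b).const_mul 2) (pd_diffAt b cΦ),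
        pd_const_mul' a 2 (dζ b)]
      ring
    have hclairΞ : pd i (fun q' => pd j Ξ q') q = pd j (fun q' => pd i Ξ q') q :=
      pd_pd_symm i j cΞ
    have hclairΦ : pd i (fun q' => pd j Φ q') q = pd j (fun q' => pd i Φ q') q :=
      pd_pd_symm i j cΦ
    -- rewrite the log-inverse derivatives
    have hloginv : ∀ (a b : Fin n),
        pd b (fun q' => Real.log (((h a q') ^ 2)⁻¹)) q
          = - pd b (fun q' => Real.log ((h a q') ^ 2)) q := by
      intro a b
      have : (fun q' => Real.log (((h a q') ^ 2)⁻¹))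
          = fun q' => -Real.log ((h a q') ^ 2) := funext fun x => Real.log_inv _
      rw [this, pd_neg']
    have hrij : pd i (ζ j) q
        = -((ζ i q - ζ j q) * pd i (fun q' => Real.log ((h j q') ^ 2)) q) := by
      rw [hrel j i q hq, hloginv j i]; ring
    have hrji : pd j (ζ i) q
        = -((ζ j q - ζ i q) * pd j (fun q' => Real.log ((h i q') ^ 2)) q) := by
      rw [hrel i j q hq, hloginv i j]; ring
    have e1 := key i j
    have e2 := key j i
    rw [hclairΞ] at e1
    rw [← hclairΦ] at e2
    rw [hrij] at e1
    rw [hrji] at e2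
    have heq := e1.symm.trans e2
    unfold Dst
    linear_combination (-1/2 : ℝ) * heq
  refine ⟨main, fun hne i j hij q hq => ?_⟩
  rcases mul_eq_zero.1 (main i j hij q hq) with h0 | h0
  · exact absurd (sub_eq_zero.1 h0) (hne i j hij q hq)
  · exact h0
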